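/- For every N ≥ 3 and every v ∈ F_2^N, the 0-th coordinate of the Boolean average is given by the F_2-identity Bav_N^0(v) = Σ_{(a,b) ∈ Par_N, (a,b) ≠ (0,0)} v_a · v_b · ∏_{k ∈ [a,b]_{Z_N} \ {a,b}} (1 + v_k) + v_0 · ∏_{k ∈ Z_N \ {0}} (1 + v_k), where the sum and products are taken in F_2 and Par_N = {(a,b) ∈ Z_N × Z_N : av(a,b) = 0}. -/
import Mathlib


namespace Rhythm

/-- `a +_N b`, addition on `Z_N = {0,…,N−1}`. -/
def addN (N a b : ℕ) : ℕ := (a + b) % N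

/-- `a −_N b`, subtraction on `Z_N = {0,…,N−1}`. -/
def subN (N a b : ℕ) : ℕ := (a + N - b) % N

/-- The discrete average `av(a,b) = a +_N ⌊(b −_N a)/2⌋`. -/
def av (N a b : ℕ) : ℕ := addN N a (subN N b a / 2)

/-- The cyclic interval `[a,b]_{Z_N}`. -/
def cyclicIcc (N a b : ℕ) : Finset ℕ :=
  if a ≤ b then Finset.Icc a b else Finset.Icc a (N - 1) ∪ Finset.Icc 0 b

/-- The half-open cyclic interval `[a,b)_{Z_N} = [a,b]_{Z_N} \ {b}`. -/
def cyclicIco (N a b : ℕ) : Finset ℕ := (cyclicIcc N a b).erase b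

/-- The half-open cyclic interval `(a,b]_{Z_N} = [a,b]_{Z_N} \ {a}`. -/
def cyclicIoc (N a b : ℕ) : Finset ℕ := (cyclicIcc N a b).erase a

/-- Cyclic successor `⟨i+1⟩_n` on `Fin n`. -/
def csucc {n : ℕ} (i : Fin n) : Fin n := ⟨(i.val + 1) % n, Nat.mod_lt _ i.pos⟩

/-- Cyclic predecessor `⟨i−1⟩_n` on `Fin n`. -/
def cpred {n : ℕ} (i : Fin n) : Fin n := ⟨(i.val + (n - 1)) % n, Nat.mod_lt _ i.pos⟩

/-- `a ∈ R_N^n`: entries in `Z_N`, pairwise distinct, and `Σ_i (a_{⟨i+1⟩_n} −_N a_i) = N`. -/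
def IsRhythm (N : ℕ) {n : ℕ} (a : Fin n → ℕ) : Prop :=
  (∀ i, a i < N) ∧ Function.Injective a ∧ (∑ i, subN N (a (csucc i)) (a i)) = N

/-- The discrete average transformation `Rav`. -/
def Rav (N : ℕ) {n : ℕ} (a : Fin n → ℕ) : Fin n → ℕ := fun i => av N (a i) (a (csucc i))

/-- The rotation `rot(a_0,…,a_{n−1}) = (a_{n−1},a_0,…,a_{n−2})`. -/
def rot {n : ℕ} (a : Fin n → ℕ) : Fin n → ℕ := fun i => a (cpred i)

/-- The translation `tr(a_0,…,a_{n−1}) = (a_0 +_N 1,…,a_{n−1} +_N 1)`. -/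
def tr (N : ℕ) {n : ℕ} (a : Fin n → ℕ) : Fin n → ℕ := fun i => addN N (a i) 1

/-- `j` is the jumping number of `a`: `a_{⟨j−1⟩_n} > a_j` and `a_{⟨k−1⟩_n} < a_k` for `k ≠ j`. -/
def IsJump {n : ℕ} (a : Fin n → ℕ) (j : Fin n) : Prop :=
  a (cpred j) > a j ∧ ∀ k, k ≠ j → a (cpred k) < a k

/-- The map `Iav`: for `n ≥ 2` it is `Rav` if `a` is proper (`N − a_{n−1} > a_0`) and
`rot ∘ Rav` otherwise; for `n ≤ 1` it is the identity. -/
def Iav (N : ℕ) {n : ℕ} (a : Fin n → ℕ) : Fin n → ℕ :=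
  if h : 2 ≤ n then
    if N - a ⟨n - 1, by omega⟩ > a ⟨0, by omega⟩ then Rav N a else rot (Rav N a)
  else a

/-- The support of a Boolean vector `v ∈ F_2^N`. -/
def supp (N : ℕ) (v : Fin N → ZMod 2) : Finset (Fin N) :=
  Finset.univ.filter fun i => v i = 1

/-- `BtoI(v)`: the increasing enumeration of the support of `v`. -/
def BtoI (N : ℕ) (v : Fin N → ZMod 2) : Fin (supp N v).card → ℕ :=
  fun i => (((supp N v).orderIsoOfFin rfl) i).1.val

/-- `ItoB(b)`: the characteristic vector of the set of entries of the tuple `b`. -/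
def ItoB (N : ℕ) {n : ℕ} (b : Fin n → ℕ) : Fin N → ZMod 2 :=
  fun i => if ∃ k, b k = i.val then 1 else 0

/-- The Boolean average `Bav = ItoB ∘ Iav ∘ BtoI : B_N → B_N`. -/
def Bav (N : ℕ) (v : Fin N → ZMod 2) : Fin N → ZMod 2 :=
  ItoB N (Iav N (BtoI N v))

/-- The cyclic shift `Btr(v_0,…,v_{N−1}) = (v_{N−1},v_0,…,v_{N−2})`. -/
def Btr (N : ℕ) (v : Fin N → ZMod 2) : Fin N → ZMod 2 := fun i => v (cpred i)

/-- `Par_N`: the set of parental pairs of zero, i.e. pairs `(a,b) ∈ Z_N × Z_N` with `av(a,b) = 0`. -/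
def Par (N : ℕ) : Finset (ℕ × ℕ) :=
  (Finset.range N ×ˢ Finset.range N).filter fun p => av N p.1 p.2 = 0

/-- The least absolute remainder `φ_N(i) ∈ Z_{N,±}` of `i ∈ Z_N`. -/
def toSigned (N : ℕ) (i : Fin N) : ℤ :=
  if (i : ℕ) ≤ N / 2 then (i : ℤ) else (i : ℤ) - N

/-- `G_N(y) = Bav_N^0(v)` where `v_{⟨j⟩_N} = 1 + y_j` for `j ∈ Z_{N,±}`. -/
def G (N : ℕ) (y : ℤ → ZMod 2) : ZMod 2 :=
  if h : 0 < N then Bav N (fun i => 1 + y (toSigned N i)) ⟨0, h⟩ else 0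

end Rhythm


section BavAux
open Rhythm

private lemma mod2N {N x : ℕ} (hN : 0 < N) (h : x < 2 * N) :
    x % N = if x < N then x else x - N := by
  split
  · exact Nat.mod_eq_of_lt ‹_›
  · rw [Nat.mod_eq_sub_mod (by omega)]
    exact Nat.mod_eq_of_lt (by omega)

private lemma dmod {N x k : ℕ} (hN : 0 < N) (hx : x < N) (hk : k < N) :
    (k + N - x) % N = if x ≤ k then k - x else k + N - x := by
  split
  · have h : k + N - x = (k - x) + N := by omega
    rw [h, Nat.add_mod_right]
    exact Nat.mod_eq_of_lt (by omega)
  · exact Nat.mod_eq_of_lt (by omega)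

private lemma av_self {N x : ℕ} (hN : 0 < N) (hx : x < N) : av N x x = x := by
  unfold av addN subN
  have h : x + N - x = N := by omega
  rw [h, Nat.mod_self]
  simp [Nat.mod_eq_of_lt hx]

private lemma av_zero_struct {N x y : ℕ} (hN : 0 < N) (hx : x < N) (hy : y < N)
    (hxy : x ≠ y) (h0 : av N x y = 0) : 0 < y ∧ (x = 0 ∨ y < x) := by
  unfold av addN subN at h0
  rcases le_or_gt x y with h | h
  · have hd : (y + N - x) % N = y - x := by
      have e : y + N - x = (y - x) + N := by omega
      rw [e, Nat.add_mod_right]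
      exact Nat.mod_eq_of_lt (by omega)
    rw [hd, mod2N hN (by omega)] at h0
    split at h0 <;> omega
  · have hd : (y + N - x) % N = y + N - x := Nat.mod_eq_of_lt (by omega)
    rw [hd, mod2N hN (by omega)] at h0
    split at h0 <;> omega

private lemma mem_cyclicIcc_iff {N x y k : ℕ} (hN : 0 < N) (hx : x < N) (hy : y < N)
    (hk : k < N) : k ∈ cyclicIcc N x y ↔ (k + N - x) % N ≤ (y + N - x) % N := by
  rw [dmod hN hx hk, dmod hN hx hy]
  unfold cyclicIcc
  split_ifs <;> simp [Finset.mem_Icc, Finset.mem_union] <;> omega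

private lemma mem_cyclicIcc_lt {N x y k : ℕ} (hN : 0 < N) (hx : x < N) (hy : y < N)
    (h : k ∈ cyclicIcc N x y) : k < N := by
  unfold cyclicIcc at h
  split_ifs at h <;> simp [Finset.mem_Icc, Finset.mem_union] at h <;> omega

private lemma csucc_val_cases {n : ℕ} (i : Fin n) :
    ((csucc i).val = i.val + 1 ∧ i.val + 1 < n) ∨ ((csucc i).val = 0 ∧ i.val + 1 = n) := by
  have h := i.isLt
  rcases Nat.lt_or_ge (i.val + 1) n with h1 | h1
  · exact Or.inl ⟨Nat.mod_eq_of_lt h1, h1⟩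
  · have h2 : i.val + 1 = n := by omega
    refine Or.inr ⟨?_, h2⟩
    show (i.val + 1) % n = 0
    rw [h2, Nat.mod_self]

private lemma csucc_ne {n : ℕ} (hn : 2 ≤ n) (i : Fin n) : csucc i ≠ i := by
  intro h
  have hv : (csucc i).val = i.val := congrArg Fin.val h
  rcases csucc_val_cases i with ⟨h1, h2⟩ | ⟨h1, h2⟩ <;> omega

private lemma cpred_csucc {n : ℕ} (i : Fin n) : cpred (csucc i) = i := by
  apply Fin.ext
  show ((i.val + 1) % n + (n - 1)) % n = i.val
  have h := i.isLt
  have hn : 0 < n := i.pos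
  rw [Nat.mod_add_mod]
  have e : i.val + 1 + (n - 1) = i.val + n := by omega
  rw [e, Nat.add_mod_right]
  exact Nat.mod_eq_of_lt h

private lemma exists_Iav_zero {N n : ℕ} (hn : 2 ≤ n) (a : Fin n → ℕ) :
    (∃ k, Iav N a k = 0) ↔ ∃ i, av N (a i) (a (csucc i)) = 0 := by
  unfold Iav
  rw [dif_pos hn]
  split_ifs with hp
  · exact Iff.rfl
  · constructor
    · rintro ⟨k, hk⟩
      exact ⟨cpred k, hk⟩
    · rintro ⟨i, hi⟩
      refine ⟨csucc i, ?_⟩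
      show Rav N a (cpred (csucc i)) = 0
      rw [cpred_csucc]
      exact hi

private lemma arc_no_middle {N n : ℕ} (hN : 0 < N) (hn : 2 ≤ n) (a : Fin n → ℕ)
    (hmono : StrictMono a) (haN : ∀ i, a i < N) (i k : Fin n)
    (h : a k ∈ cyclicIcc N (a i) (a (csucc i))) : k = i ∨ k = csucc i := by
  by_contra hc
  push_neg at hc
  obtain ⟨hki, hks⟩ := hc
  have hD := (mem_cyclicIcc_iff hN (haN i) (haN (csucc i)) (haN k)).1 h
  rw [dmod hN (haN i) (haN k), dmod hN (haN i) (haN (csucc i))] at hD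
  have hsv := csucc_val_cases i
  have hle : ∀ p q : Fin n, a p ≤ a q → p.val ≤ q.val := by
    intro p q hpq
    exact Fin.le_def.mp (hmono.le_iff_le.mp hpq)
  have hltv : ∀ p q : Fin n, a p < a q → p.val < q.val := by
    intro p q hpq
    exact Fin.lt_def.mp (hmono.lt_iff_lt.mp hpq)
  have hnei : k.val ≠ i.val := fun hh => hki (Fin.ext hh)
  have hnes : k.val ≠ (csucc i).val := fun hh => hks (Fin.ext hh)
  have hkn := k.isLt
  have hsN := haN (csucc i)
  have hkN := haN k
  have hiN := haN i
  split_ifs at hD with h1 h2 h2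
  · have h3 : k.val ≤ (csucc i).val := hle _ _ (by omega)
    have h4 : i.val ≤ k.val := hle _ _ h1
    rcases hsv with ⟨h5, h6⟩ | ⟨h5, h6⟩ <;> omega
  · have h3 : (csucc i).val < i.val := hltv _ _ (by omega)
    have h4 : i.val ≤ k.val := hle _ _ h1
    rcases hsv with ⟨h5, h6⟩ | ⟨h5, h6⟩ <;> omega
  · omega
  · have h3 : k.val ≤ (csucc i).val := hle _ _ (by omega)
    have h4 : (csucc i).val < i.val := hltv _ _ (by omega)
    rcases hsv with ⟨h5, h6⟩ | ⟨h5, h6⟩ <;> omega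

private lemma av_zero_unique {N n : ℕ} (hN : 0 < N) (hn : 2 ≤ n) (a : Fin n → ℕ)
    (hmono : StrictMono a) (haN : ∀ i, a i < N) (i j : Fin n)
    (hi : av N (a i) (a (csucc i)) = 0) (hj : av N (a j) (a (csucc j)) = 0) : i = j := by
  have key : ∀ m : Fin n, av N (a m) (a (csucc m)) = 0 →
      (m.val = 0 ∧ a ⟨0, by omega⟩ = 0) ∨ (m.val + 1 = n ∧ 0 < a ⟨0, by omega⟩) := by
    intro m hm
    have hane : a m ≠ a (csucc m) := fun hh => csucc_ne hn m (hmono.injective hh.symm)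
    have hc := av_zero_struct hN (haN m) (haN (csucc m)) hane hm
    rcases hc.2 with h0 | hlt
    · left
      have hm0 : m.val = 0 := by
        by_contra hmm
        have h5 : (⟨0, by omega⟩ : Fin n) < m := Fin.lt_def.mpr (show 0 < m.val by omega)
        have := hmono h5
        omega
      refine ⟨hm0, ?_⟩
      have : m = ⟨0, by omega⟩ := Fin.ext hm0
      rw [this] at h0
      exact h0
    · rcases csucc_val_cases m with ⟨h5, h6⟩ | ⟨h5, h6⟩
      · have := hmono (show m < csucc m from Fin.lt_def.mpr (by omega))
        omega
      · refine Or.inr ⟨h6, ?_⟩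
        have hcs : csucc m = ⟨0, by omega⟩ := Fin.ext h5
        have := hc.1
        rw [hcs] at this
        exact this
  rcases key i hi with ⟨h1, h2⟩ | ⟨h1, h2⟩ <;> rcases key j hj with ⟨h3, h4⟩ | ⟨h3, h4⟩
  · exact Fin.ext (by omega)
  · omega
  · omega
  · exact Fin.ext (by omega)

/-- The summand of the polynomial identity. -/
private def Tm (N : ℕ) (v : Fin N → ZMod 2) (hN : 0 < N) (p : ℕ × ℕ) : ZMod 2 :=
  v ⟨p.1 % N, Nat.mod_lt _ hN⟩ * v ⟨p.2 % N, Nat.mod_lt _ hN⟩ *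
    ∏ k ∈ ((cyclicIcc N p.1 p.2).erase p.1).erase p.2,
      (1 + v ⟨k % N, Nat.mod_lt _ hN⟩)

end BavAux

open Rhythm in
/-- For every `N ≥ 3` and every `v ∈ F_2^N`, the 0-th coordinate of the Boolean average is
given by the `F_2`-identity
`Bav_N^0(v) = Σ_{(a,b) ∈ Par_N, (a,b) ≠ (0,0)} v_a · v_b · ∏_{k ∈ [a,b]_{Z_N} \ {a,b}} (1 + v_k)
  + v_0 · ∏_{k ∈ Z_N \ {0}} (1 + v_k)`. -/
theorem Bav_zero_polynomial (N : ℕ) (hN : 3 ≤ N) (v : Fin N → ZMod 2) :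
    Bav N v ⟨0, by omega⟩ =
      (∑ p ∈ (Par N).erase (0, 0),
          v ⟨p.1 % N, Nat.mod_lt _ (by omega)⟩ * v ⟨p.2 % N, Nat.mod_lt _ (by omega)⟩ *
            ∏ k ∈ ((cyclicIcc N p.1 p.2).erase p.1).erase p.2,
              (1 + v ⟨k % N, Nat.mod_lt _ (by omega)⟩)) +
        v ⟨0, by omega⟩ *
          ∏ k ∈ (Finset.range N).erase 0, (1 + v ⟨k % N, Nat.mod_lt _ (by omega)⟩) := by
  
  have hN0 : 0 < N := by omega
  have haN : ∀ i, BtoI N v i < N := fun i => (((supp N v).orderIsoOfFin rfl) i).1.isLt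
  have hmono : StrictMono (BtoI N v) := by
    intro i j hij
    exact Fin.lt_def.mp (Subtype.coe_lt_coe.mpr (((supp N v).orderIsoOfFin rfl).strictMono hij))
  have hinj : Function.Injective (BtoI N v) := hmono.injective
  have hv1 : ∀ (x : ℕ) (hx : x < N), v ⟨x, hx⟩ = 1 ↔ ∃ i, BtoI N v i = x := by
    intro x hx
    constructor
    · intro hvx
      have hxs : (⟨x, hx⟩ : Fin N) ∈ supp N v := by simp [supp, hvx]
      obtain ⟨i, hi⟩ := ((supp N v).orderIsoOfFin rfl).surjective ⟨⟨x, hx⟩, hxs⟩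
      refine ⟨i, ?_⟩
      show (((supp N v).orderIsoOfFin rfl) i).1.val = x
      rw [hi]
    · rintro ⟨i, hi⟩
      have h1 : (((supp N v).orderIsoOfFin rfl) i).1 = ⟨x, hx⟩ := Fin.ext hi
      have hm := (((supp N v).orderIsoOfFin rfl) i).2
      rw [h1] at hm
      simpa [supp] using hm
  have hz0 : ∀ z : ZMod 2, z ≠ 0 → z = 1 := by decide
  have hz1 : ∀ z : ZMod 2, z ≠ 1 → z = 0 := by decide
  have hz2 : ∀ z : ZMod 2, 1 + z ≠ 0 → z = 0 := by decide
  have findx : ∀ (x : ℕ) (hx : x < N) (h' : x % N < N), (⟨x % N, h'⟩ : Fin N) = ⟨x, hx⟩ :=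
    fun x hx _ => Fin.ext (Nat.mod_eq_of_lt hx)
  have hmem : ∀ p : ℕ × ℕ, p ∈ (Par N).erase (0, 0) ↔
      p ≠ (0, 0) ∧ p.1 < N ∧ p.2 < N ∧ av N p.1 p.2 = 0 := by
    intro p
    simp only [Par, Finset.mem_erase, Finset.mem_filter, Finset.mem_product,
      Finset.mem_range]
    tauto
  show Bav N v ⟨0, hN0⟩ = (∑ p ∈ (Par N).erase (0, 0), Tm N v hN0 p) +
      v ⟨0, hN0⟩ * ∏ k ∈ (Finset.range N).erase 0, (1 + v ⟨k % N, Nat.mod_lt _ hN0⟩)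
  rcases Nat.lt_or_ge (supp N v).card 2 with hc2 | hc2
  · -- degenerate cases: support has at most one element
    have hIav : Iav N (BtoI N v) = BtoI N v := by
      unfold Iav
      rw [dif_neg (by omega : ¬ 2 ≤ (supp N v).card)]
    have hB : Bav N v ⟨0, hN0⟩ = if ∃ k, BtoI N v k = 0 then 1 else 0 := by
      show (if ∃ k, Iav N (BtoI N v) k = (0 : ℕ) then (1 : ZMod 2) else 0) = _
      rw [hIav]
    rcases (by omega : (supp N v).card = 0 ∨ (supp N v).card = 1) with hc | hc
    · -- empty support
      have hvz : ∀ x : Fin N, v x = 0 := by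
        intro x
        apply hz1
        intro hx
        obtain ⟨i, -⟩ := (hv1 x.val x.isLt).mp (by rwa [show (⟨x.val, x.isLt⟩ : Fin N) = x from Fin.ext rfl])
        have := i.isLt
        omega
      have hnex : ¬ ∃ k, BtoI N v k = 0 := by
        rintro ⟨k, -⟩
        have := k.isLt
        omega
      have hs0 : (∑ p ∈ (Par N).erase (0, 0), Tm N v hN0 p) = 0 := by
        apply Finset.sum_eq_zero
        intro p hp
        unfold Tm
        rw [hvz, zero_mul, zero_mul]
      rw [hB, if_neg hnex, hs0, hvz, zero_mul, add_zero]
    · -- singleton support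
      have hfin1 : ∀ i j : Fin (supp N v).card, i = j := by
        intro i j
        have hi := i.isLt
        have hj := j.isLt
        exact Fin.ext (by omega)
      have hs0 : (∑ p ∈ (Par N).erase (0, 0), Tm N v hN0 p) = 0 := by
        apply Finset.sum_eq_zero
        intro p hp
        obtain ⟨hne, hp1, hp2, hav⟩ := (hmem p).mp hp
        by_contra hTne
        unfold Tm at hTne
        have hA := mul_ne_zero_iff.mp hTne
        have hAB := mul_ne_zero_iff.mp hA.1
        have h1 : v ⟨p.1, hp1⟩ = 1 := by
          have := hz0 _ hAB.1; rwa [findx p.1 hp1] at this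
        have h2 : v ⟨p.2, hp2⟩ = 1 := by
          have := hz0 _ hAB.2; rwa [findx p.2 hp2] at this
        obtain ⟨i, hi⟩ := (hv1 p.1 hp1).mp h1
        obtain ⟨j, hj⟩ := (hv1 p.2 hp2).mp h2
        have hij : i = j := hfin1 i j
        have e12 : p.1 = p.2 := by rw [← hi, ← hj, hij]
        rw [e12, av_self hN0 hp2] at hav
        exact hne (Prod.ext_iff.mpr ⟨show p.1 = 0 by omega, show p.2 = 0 by omega⟩)
      rw [hB, hs0, zero_add]
      by_cases hv0 : v ⟨0, hN0⟩ = 1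
      · have hex := (hv1 0 hN0).mp hv0
        rw [if_pos hex, hv0, one_mul]
        symm
        apply Finset.prod_eq_one
        intro k hk
        obtain ⟨hkne, hkr⟩ := Finset.mem_erase.mp hk
        have hkN : k < N := Finset.mem_range.mp hkr
        rw [findx k hkN]
        have hk0 : v ⟨k, hkN⟩ = 0 := by
          apply hz1
          intro hk1
          obtain ⟨i, hi⟩ := (hv1 k hkN).mp hk1
          obtain ⟨i0, hi0⟩ := hex
          have : i = i0 := hfin1 i i0
          rw [this, hi0] at hi
          exact hkne hi.symm
        rw [hk0, add_zero]
      · have hv0' : v ⟨0, hN0⟩ = 0 := hz1 _ hv0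
        have hnex : ¬ ∃ k, BtoI N v k = 0 := fun hex => hv0 ((hv1 0 hN0).mpr hex)
        rw [if_neg hnex, hv0', zero_mul]
  · -- main case: support has at least two elements
    have hE := exists_Iav_zero (N := N) hc2 (BtoI N v)
    have hB : Bav N v ⟨0, hN0⟩ =
        if ∃ i, av N (BtoI N v i) (BtoI N v (csucc i)) = 0 then 1 else 0 := by
      show (if ∃ k, Iav N (BtoI N v) k = (0 : ℕ) then (1 : ZMod 2) else 0) = _
      by_cases hEE : ∃ i, av N (BtoI N v i) (BtoI N v (csucc i)) = 0
      · rw [if_pos (hE.mpr hEE), if_pos hEE]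
      · rw [if_neg (fun hx => hEE (hE.mp hx)), if_neg hEE]
    have hlast : v ⟨0, hN0⟩ *
        ∏ k ∈ (Finset.range N).erase 0, (1 + v ⟨k % N, Nat.mod_lt _ hN0⟩) = 0 := by
      have h01 : BtoI N v ⟨0, by omega⟩ < BtoI N v ⟨1, by omega⟩ :=
        hmono (Fin.lt_def.mpr Nat.zero_lt_one)
      have hne0 : BtoI N v ⟨1, by omega⟩ ≠ 0 := by omega
      have hmem1 : BtoI N v ⟨1, by omega⟩ ∈ (Finset.range N).erase 0 :=
        Finset.mem_erase.mpr ⟨hne0, Finset.mem_range.mpr (haN _)⟩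
      have hfac : (1 + v ⟨(BtoI N v ⟨1, by omega⟩) % N, Nat.mod_lt _ hN0⟩ : ZMod 2) = 0 := by
        rw [findx _ (haN ⟨1, by omega⟩),
          (hv1 _ (haN ⟨1, by omega⟩)).mpr ⟨⟨1, by omega⟩, rfl⟩]
        decide
      rw [Finset.prod_eq_zero hmem1 hfac, mul_zero]
    have F : ∀ p : ℕ × ℕ, p ∈ (Par N).erase (0, 0) → Tm N v hN0 p ≠ 0 →
        ∃ j, av N (BtoI N v j) (BtoI N v (csucc j)) = 0 ∧
          p = (BtoI N v j, BtoI N v (csucc j)) := by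
      intro p hp hTne
      obtain ⟨hne, hp1, hp2, hav⟩ := (hmem p).mp hp
      unfold Tm at hTne
      have hA := mul_ne_zero_iff.mp hTne
      have hAB := mul_ne_zero_iff.mp hA.1
      have h1 : v ⟨p.1, hp1⟩ = 1 := by
        have := hz0 _ hAB.1; rwa [findx p.1 hp1] at this
      have h2 : v ⟨p.2, hp2⟩ = 1 := by
        have := hz0 _ hAB.2; rwa [findx p.2 hp2] at this
      have hprod := Finset.prod_ne_zero_iff.mp hA.2
      have h12 : p.1 ≠ p.2 := by
        intro h
        rw [h, av_self hN0 hp2] at hav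
        exact hne (Prod.ext_iff.mpr ⟨show p.1 = 0 by omega, show p.2 = 0 by omega⟩)
      obtain ⟨j, hj⟩ := (hv1 p.1 hp1).mp h1
      have hsN : BtoI N v (csucc j) < N := haN _
      have hs1 : v ⟨BtoI N v (csucc j), hsN⟩ = 1 := (hv1 _ hsN).mpr ⟨csucc j, rfl⟩
      have hsne1 : BtoI N v (csucc j) ≠ p.1 := by
        rw [← hj]
        intro hh
        exact csucc_ne hc2 j (hinj hh)
      by_cases hcase : (BtoI N v (csucc j) + N - p.1) % N ≤ (p.2 + N - p.1) % N
      · have hsmem : BtoI N v (csucc j) ∈ cyclicIcc N p.1 p.2 :=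
          (mem_cyclicIcc_iff hN0 hp1 hp2 hsN).mpr hcase
        by_cases hsp2 : BtoI N v (csucc j) = p.2
        · refine ⟨j, ?_, Prod.ext_iff.mpr ⟨hj.symm, hsp2.symm⟩⟩
          rw [hj, hsp2]
          exact hav
        · exfalso
          have hmem2 : BtoI N v (csucc j) ∈ ((cyclicIcc N p.1 p.2).erase p.1).erase p.2 :=
            Finset.mem_erase.mpr ⟨hsp2, Finset.mem_erase.mpr ⟨hsne1, hsmem⟩⟩
          have hp' := hprod _ hmem2
          rw [findx _ hsN] at hp'
          have h0' := hz2 _ hp'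
          rw [hs1] at h0'
          exact one_ne_zero h0'
      · push_neg at hcase
        have hp2mem : p.2 ∈ cyclicIcc N p.1 (BtoI N v (csucc j)) :=
          (mem_cyclicIcc_iff hN0 hp1 hsN hp2).mpr (le_of_lt hcase)
        obtain ⟨m, hm⟩ := (hv1 p.2 hp2).mp h2
        rw [← hj, ← hm] at hp2mem
        rcases arc_no_middle hN0 hc2 _ hmono haN j m hp2mem with h | h
        · exact absurd (by rw [← hj, ← hm, h] : p.1 = p.2) h12
        · exfalso
          rw [h] at hm
          rw [hm] at hcase
          exact lt_irrefl _ hcase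
    rw [hB]
    by_cases hEE : ∃ i, av N (BtoI N v i) (BtoI N v (csucc i)) = 0
    · obtain ⟨i, hi⟩ := hEE
      rw [if_pos ⟨i, hi⟩]
      have hmem0 : (BtoI N v i, BtoI N v (csucc i)) ∈ (Par N).erase (0, 0) := by
        apply (hmem _).mpr
        refine ⟨?_, haN i, haN _, hi⟩
        intro hh
        rw [Prod.mk.injEq] at hh
        exact csucc_ne hc2 i (hinj (hh.2.trans hh.1.symm))
      have hothers : ∀ q ∈ (Par N).erase (0, 0), q ≠ (BtoI N v i, BtoI N v (csucc i)) →
          Tm N v hN0 q = 0 := by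
        intro q hq hqne
        by_contra hTq
        obtain ⟨j, hj0, hjeq⟩ := F q hq hTq
        have hji := av_zero_unique hN0 hc2 _ hmono haN j i hj0 hi
        rw [hji] at hjeq
        exact hqne hjeq
      have hT0 : Tm N v hN0 (BtoI N v i, BtoI N v (csucc i)) = 1 := by
        show v ⟨(BtoI N v i) % N, Nat.mod_lt _ hN0⟩ *
            v ⟨(BtoI N v (csucc i)) % N, Nat.mod_lt _ hN0⟩ *
            ∏ k ∈ ((cyclicIcc N (BtoI N v i) (BtoI N v (csucc i))).erase
                (BtoI N v i)).erase (BtoI N v (csucc i)),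
              (1 + v ⟨k % N, Nat.mod_lt _ hN0⟩) = 1
        rw [findx _ (haN i), findx _ (haN (csucc i)),
          (hv1 _ (haN i)).mpr ⟨i, rfl⟩, (hv1 _ (haN (csucc i))).mpr ⟨csucc i, rfl⟩,
          one_mul, one_mul]
        apply Finset.prod_eq_one
        intro k hk
        obtain ⟨hkne2, hk'⟩ := Finset.mem_erase.mp hk
        obtain ⟨hkne1, hkmem⟩ := Finset.mem_erase.mp hk'
        have hkN : k < N := mem_cyclicIcc_lt hN0 (haN i) (haN (csucc i)) hkmem
        rw [findx k hkN]
        have hk0 : v ⟨k, hkN⟩ = 0 := by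
          apply hz1
          intro hk1
          obtain ⟨m, hm⟩ := (hv1 k hkN).mp hk1
          rw [← hm] at hkmem
          rcases arc_no_middle hN0 hc2 _ hmono haN i m hkmem with h | h
          · exact hkne1 (by rw [← hm, h])
          · exact hkne2 (by rw [← hm, h])
        rw [hk0, add_zero]
      rw [Finset.sum_eq_single_of_mem _ hmem0 hothers, hT0, hlast, add_zero]
    · have hs0 : (∑ p ∈ (Par N).erase (0, 0), Tm N v hN0 p) = 0 := by
        apply Finset.sum_eq_zero
        intro p hp
        by_contra hTp
        obtain ⟨j, hj0, -⟩ := F p hp hTp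
        exact hEE ⟨j, hj0⟩
      rw [if_neg hEE, hs0, hlast, zero_add]
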